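/- The integral operator S : L²[0,1] → L²[0,1] defined by (S Ψ)(y) = ∫₀¹ exp(-|y - s|) Ψ(s) ds is injective: if S Ψ = 0 in L²[0,1], then Ψ = 0 almost everywhere. -/

import Mathlib

/-!
Splitting the kernel at `s = y` gives
`S Ψ (y) = e^{-y} A(y) + e^{y} B(y)` with `A(y) = ∫₀^y e^s Ψ` and `B(y) = ∫_y^1 e^{-s} Ψ`.
The right-hand side is continuous, so it vanishes on all of `(0,1)`, and by the Lebesgue
differentiation theorem so does its a.e. derivative `e^{y} B(y) - e^{-y} A(y)`, the two `Ψ`-terms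
cancelling. Hence `A = 0` on `(0,1)`, and differentiating `A` once more gives `e^y Ψ = 0` a.e.
-/

open MeasureTheory Set Filter Topology Real

theorem ae_eq_zero_of_hasDerivAt_of_ae_eq_zero {E : Type*} [NormedAddCommGroup E]
    [NormedSpace ℝ E] {F f : ℝ → E} {U : Set ℝ} (hU : IsOpen U) (hF : ContinuousOn F U)
    (hF0 : F =ᵐ[volume.restrict U] 0) (hderiv : ∀ᵐ x ∂volume.restrict U, HasDerivAt F (f x) x) :
    f =ᵐ[volume.restrict U] 0 := by
  have hzero : EqOn F 0 U := Measure.eqOn_open_of_ae_eq hF0 hU hF continuousOn_const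
  filter_upwards [hderiv, ae_restrict_mem hU.measurableSet] with x hx hxU
  have hlocal : F =ᶠ[𝓝 x] fun _ => 0 := eventually_of_mem (hU.mem_nhds hxU) hzero
  exact hx.unique ((hasDerivAt_const x 0).congr_of_eventuallyEq hlocal)

theorem IntervalIntegrable.ae_hasDerivAt_integral_Ioo {E : Type*} [NormedAddCommGroup E]
    [NormedSpace ℝ E] [CompleteSpace E] {f : ℝ → E} {a b : ℝ}
    (hf : IntervalIntegrable f volume a b) :
    ∀ᵐ x ∂volume.restrict (Ioo a b), HasDerivAt (fun y => ∫ t in a..y, f t) (f x) x ∧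
      HasDerivAt (fun y => ∫ t in y..b, f t) (-f x) x := by
  filter_upwards [ae_restrict_of_ae hf.ae_hasDerivAt_integral, ae_restrict_mem measurableSet_Ioo]
    with x hx hxI
  have hx' := hx (Ioo_subset_Icc_self.trans Icc_subset_uIcc hxI)
  have hsymm : (fun y => ∫ t in y..b, f t) = fun y => -∫ t in b..y, f t :=
    funext fun y => intervalIntegral.integral_symm _ _
  exact ⟨hx' a left_mem_uIcc, hsymm ▸ (hx' b right_mem_uIcc).neg⟩

noncomputable def expKernelIntegral (a b : ℝ) (f : ℝ → ℝ) (y : ℝ) : ℝ :=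
  ∫ s in Icc a b, exp (-|y - s|) * f s

theorem expKernelIntegral_eq {f : ℝ → ℝ} {a b y : ℝ} (hf : IntegrableOn f (Icc a b))
    (hy : y ∈ Icc a b) :
    expKernelIntegral a b f y =
      exp (-y) * (∫ s in a..y, exp s * f s) + exp y * ∫ s in y..b, exp (-s) * f s := by
  have hab : a ≤ b := hy.1.trans hy.2
  have hint : IntervalIntegrable (fun s => exp (-|y - s|) * f s) volume a b :=
    (intervalIntegrable_iff_integrableOn_Icc_of_le hab).2
      (hf.continuousOn_mul (by fun_prop) isCompact_Icc)
  have hy' : y ∈ uIcc a b := uIcc_of_le hab ▸ hy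
  rw [expKernelIntegral, integral_Icc_eq_integral_Ioc, ← intervalIntegral.integral_of_le hab,
    ← intervalIntegral.integral_add_adjacent_intervals (hint.mono_set (uIcc_subset_uIcc_left hy'))
      (hint.mono_set (uIcc_subset_uIcc_right hy'))]
  congr 1
  · rw [← intervalIntegral.integral_const_mul]
    refine intervalIntegral.integral_congr fun s hs => ?_
    rw [uIcc_of_le hy.1] at hs
    rw [abs_of_nonneg (sub_nonneg.2 hs.2), ← mul_assoc, ← exp_add, neg_sub, sub_eq_neg_add]
  · rw [← intervalIntegral.integral_const_mul]
    refine intervalIntegral.integral_congr fun s hs => ?_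
    rw [uIcc_of_le hy.2] at hs
    rw [abs_of_nonpos (sub_nonpos.2 hs.1), ← mul_assoc, ← exp_add, neg_neg, ← sub_eq_add_neg]

theorem integral_exp_mul_ae_eq_zero_of_expKernelIntegral_ae_eq_zero {f : ℝ → ℝ} {a b : ℝ}
    (hab : a ≤ b) (hf : IntegrableOn f (Icc a b))
    (h : expKernelIntegral a b f =ᵐ[volume.restrict (Icc a b)] 0) :
    (fun x => ∫ t in a..x, exp t * f t) =ᵐ[volume.restrict (Ioo a b)] 0 := by
  have hIcc : uIcc a b = Icc a b := uIcc_of_le hab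
  have hIoo : Ioo a b ⊆ uIcc a b := Ioo_subset_Icc_self.trans Icc_subset_uIcc
  have hA_int : IntegrableOn (fun t => exp t * f t) (uIcc a b) :=
    hIcc ▸ hf.continuousOn_mul (by fun_prop) isCompact_Icc
  have hB_int : IntegrableOn (fun t => exp (-t) * f t) (uIcc a b) :=
    hIcc ▸ hf.continuousOn_mul (by fun_prop) isCompact_Icc
  set A : ℝ → ℝ := fun x => ∫ t in a..x, exp t * f t
  set B : ℝ → ℝ := fun x => ∫ t in x..b, exp (-t) * f t
  set F : ℝ → ℝ := fun x => exp (-x) * A x + exp x * B x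
  have hF_cont : ContinuousOn F (Ioo a b) := by
    have hA := (intervalIntegral.continuousOn_primitive_interval hA_int).mono hIoo
    have hB := (intervalIntegral.continuousOn_primitive_interval_left hB_int).mono hIoo
    fun_prop
  have hF : F =ᵐ[volume.restrict (Ioo a b)] 0 := by
    rw [restrict_Ioo_eq_restrict_Icc]
    filter_upwards [h, ae_restrict_mem measurableSet_Icc] with y hy hyI
    exact (expKernelIntegral_eq hf hyI).symm.trans hy
  have hF_deriv :
      ∀ᵐ x ∂volume.restrict (Ioo a b), HasDerivAt F (exp x * B x - exp (-x) * A x) x := by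
    filter_upwards [hA_int.intervalIntegrable.ae_hasDerivAt_integral_Ioo,
      hB_int.intervalIntegrable.ae_hasDerivAt_integral_Ioo] with x ⟨hA, _⟩ ⟨_, hB⟩
    refine (((hasDerivAt_neg x).exp.mul hA).add ((hasDerivAt_exp x).mul hB)).congr_deriv ?_
    ring
  filter_upwards [hF, ae_eq_zero_of_hasDerivAt_of_ae_eq_zero isOpen_Ioo hF_cont hF hF_deriv]
    with x hsum hdiff
  have hA0 : exp (-x) * A x = 0 := by
    simp only [Pi.zero_apply] at hsum hdiff
    linarith
  exact (mul_eq_zero.1 hA0).resolve_left (exp_ne_zero _)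

/-- The integral operator `S` with kernel `exp (-|y - s|)` is injective: if
`Ψ ∈ L²[0,1]` and `S Ψ = 0` in `L²[0,1]` (i.e. the integral vanishes for a.e. `y`),
then `Ψ = 0` almost everywhere on `[0,1]`. -/
theorem hilbertSchmidt_operator_injective
    (Ψ : ℝ → ℝ) (hΨ : MemLp Ψ 2 (volume.restrict (Set.Icc (0 : ℝ) 1)))
    (h0 : (fun y : ℝ => ∫ s in Set.Icc (0 : ℝ) 1, Real.exp (-|y - s|) * Ψ s)
        =ᵐ[volume.restrict (Set.Icc (0 : ℝ) 1)] 0) :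
    Ψ =ᵐ[volume.restrict (Set.Icc (0 : ℝ) 1)] 0 := by
  have hΨ_int : IntegrableOn Ψ (Icc 0 1) := hΨ.integrable one_le_two
  have hA_int : IntervalIntegrable (fun t => exp t * Ψ t) volume 0 1 :=
    (intervalIntegrable_iff_integrableOn_Icc_of_le zero_le_one).2
      (hΨ_int.continuousOn_mul (by fun_prop) isCompact_Icc)
  have hA0 := integral_exp_mul_ae_eq_zero_of_expKernelIntegral_ae_eq_zero zero_le_one hΨ_int h0
  have hA_cont : ContinuousOn (fun x => ∫ t in 0..x, exp t * Ψ t) (Ioo 0 1) :=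
    (intervalIntegral.continuousOn_primitive_interval' hA_int left_mem_uIcc).mono
      (Ioo_subset_Icc_self.trans Icc_subset_uIcc)
  have hexpΨ : (fun t => exp t * Ψ t) =ᵐ[volume.restrict (Ioo 0 1)] 0 :=
    ae_eq_zero_of_hasDerivAt_of_ae_eq_zero isOpen_Ioo hA_cont hA0
      (hA_int.ae_hasDerivAt_integral_Ioo.mono fun _ hx => hx.1)
  rw [← restrict_Ioo_eq_restrict_Icc]
  filter_upwards [hexpΨ] with x hx
  exact (mul_eq_zero.1 hx).resolve_left (exp_ne_zero _)
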